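/- Among all probability densities p on ℝ^d with support contained in Ω₀ = {x : (x−μ)^T Σ^{-1}(x−μ) ≤ 4+d}, mean μ, and covariance matrix Σ, the quadratic Rényi entropy h₂(p) = −log(∫ p²) is uniquely maximized by the Pearson type II density p*(x) = A(1 − β(x−μ)^T Σ^{-1}(x−μ)) on Ω₀ with β = 1/(4+d) and A = Γ(2+d/2)β^{d/2}/(π^{d/2}|Σ|^{1/2}); that is, h₂(p) ≤ h₂(p*) with equality iff p = p* Lebesgue-almost everywhere. -/

import Mathlib

open MeasureTheory Real Matrix

open Set

open scoped MatrixOrder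

/-!
On `Ω₀` the density `p*` is affine in the quadratic form `Q x = (x - μ)ᵀ Σ⁻¹ (x - μ)`, so for
every density `p` supported in `Ω₀` with covariance `Σ` the pairing
`∫ p p* = A (∫ p - β ∫ p Q) = A (1 - β d)` is fixed by the constraints (`∫ p Q = tr (Σ⁻¹ Σ) = d`).
A change of variables to polar coordinates gives the same value for `∫ p*²`. Hence
`∫ (p - p*)² = ∫ p² - ∫ p*² ≥ 0`, with equality iff `p = p*` almost everywhere.
-/

section L2

variable {α : Type*} [MeasurableSpace α] {μ : Measure α} {f g : α → ℝ}

theorem integral_sub_sq_eq_of_integral_mul_eq (hf : Integrable (fun a => f a ^ 2) μ)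
    (hg : Integrable (fun a => g a ^ 2) μ) (hfg : Integrable (fun a => f a * g a) μ)
    (h : ∫ a, f a * g a ∂μ = ∫ a, g a ^ 2 ∂μ) :
    Integrable (fun a => (f a - g a) ^ 2) μ ∧
      ∫ a, (f a - g a) ^ 2 ∂μ = ∫ a, f a ^ 2 ∂μ - ∫ a, g a ^ 2 ∂μ := by
  have hexp : (fun a => (f a - g a) ^ 2) = fun a => f a ^ 2 - 2 * (f a * g a) + g a ^ 2 := by
    ext a; ring
  have hint : Integrable (fun a => f a ^ 2 - 2 * (f a * g a)) μ := hf.sub (hfg.const_mul 2)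
  refine ⟨hexp ▸ hint.add hg, ?_⟩
  rw [hexp, integral_add hint hg, integral_sub hf (hfg.const_mul 2), integral_const_mul, h]
  ring

theorem integral_sq_le_and_eq_iff_ae_eq (hf : Integrable (fun a => f a ^ 2) μ)
    (hg : Integrable (fun a => g a ^ 2) μ) (hfg : Integrable (fun a => f a * g a) μ)
    (h : ∫ a, f a * g a ∂μ = ∫ a, g a ^ 2 ∂μ) :
    ∫ a, g a ^ 2 ∂μ ≤ ∫ a, f a ^ 2 ∂μ ∧ (∫ a, f a ^ 2 ∂μ = ∫ a, g a ^ 2 ∂μ ↔ f =ᵐ[μ] g) := by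
  obtain ⟨hint, heq⟩ := integral_sub_sq_eq_of_integral_mul_eq hf hg hfg h
  have hnonneg : 0 ≤ ∫ a, (f a - g a) ^ 2 ∂μ := integral_nonneg fun a => sq_nonneg _
  refine ⟨by linarith, ?_⟩
  rw [← sub_eq_zero, ← heq, integral_eq_zero_iff_of_nonneg (fun a => sq_nonneg _) hint]
  refine Filter.eventually_congr (Filter.Eventually.of_forall fun a => ?_)
  simp [sub_eq_zero]

theorem integral_mul_truncated_affine {q : α → ℝ} (A β R : ℝ) (hf0 : ∀ a, ¬q a ≤ R → f a = 0)
    (hf : Integrable f μ) (hfq : Integrable (fun a => f a * q a) μ) :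
    Integrable (fun a => f a * if q a ≤ R then A * (1 - β * q a) else 0) μ ∧
      ∫ a, f a * (if q a ≤ R then A * (1 - β * q a) else 0) ∂μ =
        A * (∫ a, f a ∂μ - β * ∫ a, f a * q a ∂μ) := by
  have hexp : (fun a => f a * if q a ≤ R then A * (1 - β * q a) else 0) =
      fun a => A * f a - A * β * (f a * q a) := by
    ext a
    split_ifs with h
    · ring
    · rw [hf0 a h]; ring
  rw [hexp, integral_sub (hf.const_mul A) (hfq.const_mul _), integral_const_mul,
    integral_const_mul]
  exact ⟨(hf.const_mul A).sub (hfq.const_mul _), by ring⟩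

end L2

theorem integral_mul_dotProduct_mulVec {ι α : Type*} [Fintype ι] [MeasurableSpace α]
    {μ : Measure α} {p : α → ℝ} {X : α → ι → ℝ} {C : Matrix ι ι ℝ} (M : Matrix ι ι ℝ)
    (hC : ∀ i j, Integrable (fun a => p a * X a i * X a j) μ ∧
      ∫ a, p a * X a i * X a j ∂μ = C i j) :
    Integrable (fun a => p a * (X a ⬝ᵥ (M *ᵥ X a))) μ ∧
      ∫ a, p a * (X a ⬝ᵥ (M *ᵥ X a)) ∂μ = trace (M * Cᵀ) := by
  have hexp : (fun a => p a * (X a ⬝ᵥ (M *ᵥ X a))) =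
      fun a => ∑ i, ∑ j, M i j * (p a * X a i * X a j) := by
    ext a
    simp only [dotProduct, mulVec, Finset.mul_sum]
    refine Finset.sum_congr rfl fun i _ => Finset.sum_congr rfl fun j _ => ?_
    ring
  have hint : ∀ i j, Integrable (fun a => M i j * (p a * X a i * X a j)) μ :=
    fun i j => (hC i j).1.const_mul _
  rw [hexp]
  refine ⟨integrable_finsetSum _ fun i _ => integrable_finsetSum _ fun j _ => hint i j, ?_⟩
  simp only [integral_finsetSum _ fun i _ => integrable_finsetSum _ fun j _ => hint i j,
    integral_finsetSum _ fun j _ => hint _ j, integral_const_mul, (hC _ _).2, trace, diag,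
    mul_apply, transpose_apply]

section ChangeOfVariables

variable {ι : Type*} [Fintype ι]

theorem integral_comp_mulVec [DecidableEq ι] {M : Matrix ι ι ℝ} (hM : M.det ≠ 0)
    (g : (ι → ℝ) → ℝ) :
    ∫ x, g (M *ᵥ x) = |M.det|⁻¹ * ∫ x, g x := by
  let e := (M.toLinearEquiv' (M.invertibleOfIsUnitDet hM.isUnit)).toContinuousLinearEquiv
  have hmap : Measure.map e volume = ENNReal.ofReal |M.det⁻¹| • volume :=
    Real.map_matrix_volume_pi_eq_smul_volume_pi hM
  calc ∫ x, g (M *ᵥ x) = ∫ x, g x ∂(Measure.map e volume) :=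
        (e.toHomeomorph.measurableEmbedding.integral_map g).symm
    _ = |M.det|⁻¹ * ∫ x, g x := by
        rw [hmap, integral_smul_measure, ENNReal.toReal_ofReal (abs_nonneg _), abs_inv,
          smul_eq_mul]

theorem integral_comp_dotProduct_inv_mulVec [DecidableEq ι] {S : Matrix ι ι ℝ} (hS : S.PosDef)
    (m : ι → ℝ) (g : ℝ → ℝ) :
    ∫ x, g ((x - m) ⬝ᵥ (S⁻¹ *ᵥ (x - m))) = √S.det * ∫ u : ι → ℝ, g (u ⬝ᵥ u) := by
  obtain ⟨B, hB⟩ := CStarAlgebra.nonneg_iff_eq_star_mul_self.mp hS.inv.posSemidef.nonneg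
  have hB' : S⁻¹ = Bᵀ * B := by simpa [star_eq_conjTranspose] using hB
  have hform : ∀ y, y ⬝ᵥ (S⁻¹ *ᵥ y) = (B *ᵥ y) ⬝ᵥ (B *ᵥ y) := fun y => by
    rw [hB', ← mulVec_mulVec, dotProduct_mulVec, vecMul_transpose]
  have hdetB : B.det ^ 2 = S.det⁻¹ := by
    rw [← Ring.inverse_eq_inv', ← det_nonsing_inv, hB', det_mul, det_transpose, sq]
  have hB0 : B.det ≠ 0 := fun h => hS.det_pos.ne (by simpa [h] using hdetB)
  calc ∫ x, g ((x - m) ⬝ᵥ (S⁻¹ *ᵥ (x - m))) = ∫ y, g (y ⬝ᵥ (S⁻¹ *ᵥ y)) :=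
        integral_sub_right_eq_self (fun y => g (y ⬝ᵥ (S⁻¹ *ᵥ y))) m
    _ = ∫ y, g ((B *ᵥ y) ⬝ᵥ (B *ᵥ y)) := by simp_rw [hform]
    _ = √S.det * ∫ u : ι → ℝ, g (u ⬝ᵥ u) := by
        rw [integral_comp_mulVec hB0 fun u => g (u ⬝ᵥ u), ← sqrt_sq_eq_abs, hdetB, sqrt_inv,
          inv_inv]

theorem integral_comp_dotProduct_self [Nonempty ι] (g : ℝ → ℝ) :
    ∫ u : ι → ℝ, g (u ⬝ᵥ u) = Fintype.card ι * (√π ^ Fintype.card ι /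
      Gamma (Fintype.card ι / 2 + 1)) * ∫ y in Ioi 0, y ^ (Fintype.card ι - 1) * g (y ^ 2) := by
  have hnorm : ∀ v : EuclideanSpace ℝ ι, v.ofLp ⬝ᵥ v.ofLp = ‖v‖ ^ 2 := fun v => by
    rw [EuclideanSpace.norm_eq, sq_sqrt (by positivity)]
    simp [dotProduct, sq]
  have hball : volume.real (Metric.ball (0 : EuclideanSpace ℝ ι) 1) =
      √π ^ Fintype.card ι / Gamma (Fintype.card ι / 2 + 1) := by
    rw [measureReal_def, EuclideanSpace.volume_ball, ENNReal.ofReal_one, one_pow, one_mul,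
      ENNReal.toReal_ofReal (by positivity)]
  rw [← (PiLp.volume_preserving_ofLp ι).integral_comp
    (MeasurableEquiv.toLp 2 (ι → ℝ)).symm.measurableEmbedding]
  simp only [hnorm]
  rw [integral_fun_norm_addHaar volume fun r => g (r ^ 2), finrank_euclideanSpace, hball]
  simp only [nsmul_eq_mul, smul_eq_mul, mul_assoc]

end ChangeOfVariables

theorem setIntegral_Ioi_eq_intervalIntegral {F G : ℝ → ℝ} {a : ℝ} (ha : 0 ≤ a)
    (hFG : EqOn F G (Ioc 0 a)) (hF : ∀ y, a < y → F y = 0) :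
    ∫ y in Ioi 0, F y = ∫ y in (0 : ℝ)..a, G y := by
  rw [setIntegral_eq_of_subset_of_forall_sdiff_eq_zero measurableSet_Ioi Ioc_subset_Ioi_self
    fun y hy => hF y (not_le.mp fun h => hy.2 ⟨hy.1, h⟩),
    setIntegral_congr_fun measurableSet_Ioc hFG, intervalIntegral.integral_of_le ha]

theorem integral_pow_mul_one_sub_mul_sq_sq (n : ℕ) (a β : ℝ) :
    ∫ y in (0 : ℝ)..a, y ^ n * (1 - β * y ^ 2) ^ 2 =
      a ^ (n + 1) / (n + 1) - 2 * β * (a ^ (n + 3) / (n + 3)) +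
        β ^ 2 * (a ^ (n + 5) / (n + 5)) := by
  have hexp : ∀ y : ℝ, y ^ n * (1 - β * y ^ 2) ^ 2 =
      y ^ n - 2 * β * y ^ (n + 2) + β ^ 2 * y ^ (n + 4) := fun y => by ring
  have hint : ∀ k : ℕ, IntervalIntegrable (fun y : ℝ => y ^ k) volume 0 a :=
    fun k => intervalIntegral.intervalIntegrable_pow k
  simp_rw [hexp]
  rw [intervalIntegral.integral_add ((hint n).sub ((hint _).const_mul _)) ((hint _).const_mul _),
    intervalIntegral.integral_sub (hint n) ((hint _).const_mul _),
    intervalIntegral.integral_const_mul, intervalIntegral.integral_const_mul,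
    integral_pow, integral_pow, integral_pow]
  push_cast
  ring

/-- `√D · (√π ^ d / Γ (d / 2 + 1)) · √(4 + d) ^ d` is the volume of `Ω₀` when `D = det Σ`. -/
theorem pearsonII_const_mul_ellipsoid_volume {d : ℕ} {D β A : ℝ} (hD : 0 < D)
    (hβ : β = (4 + (d : ℝ))⁻¹)
    (hA : A = Gamma (2 + (d : ℝ) / 2) * β ^ ((d : ℝ) / 2) / (π ^ ((d : ℝ) / 2) * √D)) :
    A * √D * (√π ^ d / Gamma (d / 2 + 1)) * √(4 + (d : ℝ)) ^ d = (d + 2) / 2 := by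
  have hsqrt_pow : ∀ x : ℝ, 0 ≤ x → √x ^ d = x ^ ((d : ℝ) / 2) := fun x hx => by
    rw [sqrt_eq_rpow, ← rpow_natCast, ← rpow_mul hx]
    ring_nf
  have hGamma : Gamma (2 + (d : ℝ) / 2) = ((d : ℝ) / 2 + 1) * Gamma (d / 2 + 1) := by
    rw [← Gamma_add_one (by positivity)]
    ring_nf
  have hβR : β ^ ((d : ℝ) / 2) * (4 + (d : ℝ)) ^ ((d : ℝ) / 2) = 1 := by
    rw [hβ, inv_rpow (by positivity), inv_mul_cancel₀ (by positivity)]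
  rw [hsqrt_pow π pi_pos.le, hsqrt_pow _ (by positivity), hA, hGamma]
  field_simp
  linear_combination hβR

theorem integral_sq_pearsonII {d : ℕ} (hd : 0 < d) (m : Fin d → ℝ)
    {S : Matrix (Fin d) (Fin d) ℝ} (hS : S.PosDef) {β A : ℝ} (hβ : β = (4 + (d : ℝ))⁻¹)
    (hA : A = Gamma (2 + (d : ℝ) / 2) * β ^ ((d : ℝ) / 2) /
      (π ^ ((d : ℝ) / 2) * √S.det)) :
    ∫ x, (if (x - m) ⬝ᵥ (S⁻¹ *ᵥ (x - m)) ≤ 4 + (d : ℝ) then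
        A * (1 - β * ((x - m) ⬝ᵥ (S⁻¹ *ᵥ (x - m)))) else 0) ^ 2 = A * (1 - β * d) := by
  have : Nonempty (Fin d) := Fin.pos_iff_nonempty.mp hd
  have hvol := pearsonII_const_mul_ellipsoid_volume hS.det_pos hβ hA
  set R : ℝ := 4 + d with hRd
  have hR : 0 < R := by positivity
  rw [integral_comp_dotProduct_inv_mulVec hS m
      fun t => (if t ≤ R then A * (1 - β * t) else 0) ^ 2,
    integral_comp_dotProduct_self fun t => (if t ≤ R then A * (1 - β * t) else 0) ^ 2,
    Fintype.card_fin,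
    setIntegral_Ioi_eq_intervalIntegral (G := fun y => A ^ 2 * (y ^ (d - 1) * (1 - β * y ^ 2) ^ 2))
      (sqrt_nonneg R) ?_ ?_,
    intervalIntegral.integral_const_mul, integral_pow_mul_one_sub_mul_sq_sq]
  · have hsq : √R ^ 2 = R := sq_sqrt hR.le
    rw [show d - 1 + 1 = d by omega, show d - 1 + 3 = d + 2 by omega,
      show d - 1 + 5 = d + 4 by omega, pow_add, pow_add, hsq, Nat.cast_pred hd,
      sub_add_cancel, show (d : ℝ) - 1 + 3 = d + 2 by ring, show (d : ℝ) - 1 + 5 = 4 + d by ring,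
      show √R ^ 4 = R ^ 2 by rw [show 4 = 2 * 2 by rfl, pow_mul, hsq], hβ]
    generalize √π ^ d / Gamma (d / 2 + 1) = V at hvol ⊢
    generalize √R ^ d = X at hvol ⊢
    clear_value R
    subst hRd
    calc _ = A * (A * √S.det * V * X) * (8 / ((d + 2) * (4 + d))) := by
          field_simp
          ring
      _ = A * (1 - (4 + (d : ℝ))⁻¹ * d) := by
          rw [hvol]
          field_simp
          ring
  · intro y hy
    have hy2 : y ^ 2 ≤ R := (pow_le_pow_left₀ hy.1.le hy.2 2).trans (sq_sqrt hR.le).le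
    simp only [if_pos hy2]
    ring
  · intro y hy
    have hy2 : R < y ^ 2 := (sqrt_lt' (hy.trans_le' (sqrt_nonneg R))).mp hy
    simp [not_le.mpr hy2]

theorem stmt_15_general (d : ℕ) (hd : 0 < d) (μv : Fin d → ℝ)
    (S : Matrix (Fin d) (Fin d) ℝ) (hS : S.PosDef)
    (β A : ℝ) (hβ : β = (4 + (d : ℝ))⁻¹)
    (hA : A = Real.Gamma (2 + (d : ℝ) / 2) * β ^ ((d : ℝ) / 2) /
      (π ^ ((d : ℝ) / 2) * Real.sqrt S.det))
    (pstar : (Fin d → ℝ) → ℝ)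
    (hpstar : pstar = fun x =>
      if (x - μv) ⬝ᵥ (S⁻¹ *ᵥ (x - μv)) ≤ 4 + (d : ℝ) then
        A * (1 - β * ((x - μv) ⬝ᵥ (S⁻¹ *ᵥ (x - μv))))
      else 0)
    (p : (Fin d → ℝ) → ℝ)
    (hpi : Integrable p) (hp1 : ∫ x, p x = 1)
    (hp2 : Integrable (fun x => p x ^ 2))
    (hsupp : ∀ x, ¬((x - μv) ⬝ᵥ (S⁻¹ *ᵥ (x - μv)) ≤ 4 + (d : ℝ)) → p x = 0)
    (hcov : ∀ i j, Integrable (fun x => p x * (x i - μv i) * (x j - μv j)) ∧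
      (∫ x, p x * (x i - μv i) * (x j - μv j)) = S i j) :
    -Real.log (∫ x, p x ^ 2) ≤ -Real.log (∫ x, pstar x ^ 2) ∧
    (-Real.log (∫ x, p x ^ 2) = -Real.log (∫ x, pstar x ^ 2) ↔ p =ᵐ[volume] pstar) := by
  subst hpstar
  obtain ⟨hpQ, hpQ_eq⟩ := integral_mul_dotProduct_mulVec (X := fun x => x - μv) S⁻¹ hcov
  have htrace : trace (S⁻¹ * Sᵀ) = d := by
    rw [(isHermitian_iff_isSymm.mp hS.isHermitian).eq, nonsing_inv_mul S hS.det_pos.ne'.isUnit,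
      trace_one, Fintype.card_fin]
  obtain ⟨hpair_int, hpair⟩ := integral_mul_truncated_affine A β (4 + d) hsupp hpi hpQ
  have hstar := integral_sq_pearsonII hd μv hS hβ hA
  have hpos : 0 < A * (1 - β * d) := by
    have hA0 : 0 < A := by
      have := hS.det_pos
      have : 0 < β := by rw [hβ]; positivity
      have : 0 < Gamma (2 + (d : ℝ) / 2) := Gamma_pos_of_pos (by positivity)
      rw [hA]; positivity
    have hβd : β * d < 1 := by rw [hβ, inv_mul_lt_one₀ (by positivity)]; linarith
    nlinarith
  rw [← hstar] at hpos
  -- a non-integrable function would have integral `0`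
  have hstar_int := Integrable.of_integral_ne_zero hpos.ne'
  obtain ⟨hle, hiff⟩ := integral_sq_le_and_eq_iff_ae_eq hp2 hstar_int hpair_int
    (by rw [hpair, hp1, hpQ_eq, htrace, hstar])
  refine ⟨neg_le_neg (log_le_log hpos hle), ?_⟩
  rw [neg_inj, ← hiff]
  exact log_injOn_pos.eq_iff (hpos.trans_le hle) hpos

/-- Maximum quadratic Rényi entropy property of the Pearson type II density: among
all densities `p` supported in `Ω₀ = {x : (x−μ)ᵀΣ⁻¹(x−μ) ≤ 4+d}` with mean `μ` and
covariance `Σ`, `h₂(p) = −log ∫ p² ≤ h₂(p*)`, with equality iff `p = p*` a.e. -/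
theorem stmt_15 (d : ℕ) (hd : 0 < d) (μv : Fin d → ℝ)
    (S : Matrix (Fin d) (Fin d) ℝ) (hS : S.PosDef)
    (β A : ℝ) (hβ : β = (4 + (d : ℝ))⁻¹)
    (hA : A = Real.Gamma (2 + (d : ℝ) / 2) * β ^ ((d : ℝ) / 2) /
      (π ^ ((d : ℝ) / 2) * Real.sqrt S.det))
    (pstar : (Fin d → ℝ) → ℝ)
    (hpstar : pstar = fun x =>
      if (x - μv) ⬝ᵥ (S⁻¹ *ᵥ (x - μv)) ≤ 4 + (d : ℝ) then
        A * (1 - β * ((x - μv) ⬝ᵥ (S⁻¹ *ᵥ (x - μv))))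
      else 0)
    (p : (Fin d → ℝ) → ℝ) (hpm : Measurable p) (hpn : ∀ x, 0 ≤ p x)
    (hpi : Integrable p) (hp1 : ∫ x, p x = 1)
    (hp2 : Integrable (fun x => p x ^ 2))
    (hsupp : ∀ x, ¬((x - μv) ⬝ᵥ (S⁻¹ *ᵥ (x - μv)) ≤ 4 + (d : ℝ)) → p x = 0)
    (hmean : ∀ i, Integrable (fun x => p x * x i) ∧ (∫ x, p x * x i) = μv i)
    (hcov : ∀ i j, Integrable (fun x => p x * (x i - μv i) * (x j - μv j)) ∧
      (∫ x, p x * (x i - μv i) * (x j - μv j)) = S i j) :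
    -Real.log (∫ x, p x ^ 2) ≤ -Real.log (∫ x, pstar x ^ 2) ∧
    (-Real.log (∫ x, p x ^ 2) = -Real.log (∫ x, pstar x ^ 2) ↔ p =ᵐ[volume] pstar) :=
  stmt_15_general d hd μv S hS β A hβ hA pstar hpstar p hpi hp1 hp2 hsupp hcov
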